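/- arXiv:2307.07019 — 3 statements merged into one kernel-verified Lean document; each statement's English description precedes it below -/
import Mathlib

section
/- Let A be a unital C*-algebra and Z a central C*-subalgebra containing the unit. Then for every pure state μ of A, every z ∈ Z and every a ∈ A, one has μ(z a) = μ(z) μ(a); in particular the restriction of μ to Z is a multiplicative linear functional. -/
/-!
If `w` is central with `0 ≤ w ≤ 1` and `0 < μ w < 1`, then `a ↦ μ (w a) / μ w` and
`a ↦ μ ((1 - w) a) / μ (1 - w)` are states (positive because `b⋆ w b ≥ 0` for central `w`), and `μ`
is their convex combination with weights `μ w` and `1 - μ w`. Purity forces the first to be `μ`,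
i.e. `μ (w a) = μ w μ a`. Since this identity is linear in `w` and holds for `w = 1`, it passes to
every self-adjoint central element (an affine image of such a `w`) and then, via real and imaginary
parts, to every central element.
-/

open scoped ComplexOrder

section StarOrderedRing

variable {R M F : Type*} [NonUnitalSemiring R] [PartialOrder R] [StarRing R] [StarOrderedRing R]
  [AddCommMonoid M] [PartialOrder M] [IsOrderedAddMonoid M] [FunLike F R M]
  [AddMonoidHomClass F R M]

theorem map_nonneg_of_map_star_mul_self_nonneg {f : F} (hf : ∀ s, 0 ≤ f (star s * s)) {x : R}
    (hx : 0 ≤ x) : 0 ≤ f x := by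
  have hx' := StarOrderedRing.nonneg_iff.mp hx
  clear hx
  induction hx' using AddSubmonoid.closure_induction with
  | mem _ h => obtain ⟨s, rfl⟩ := h; exact hf s
  | zero => simp
  | add _ _ _ _ h₁ h₂ => rw [map_add]; exact add_nonneg h₁ h₂

end StarOrderedRing

def leftMultiplicativeDomain {R A : Type*} [CommSemiring R] [Semiring A] [Algebra R A]
    (μ : A →ₗ[R] R) : Submodule R A where
  carrier := {z | ∀ a, μ (z * a) = μ z * μ a}
  add_mem' hz hw a := by simp [add_mul, hz a, hw a]
  zero_mem' a := by simp
  smul_mem' r z hz a := by simp [hz a, mul_assoc]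

theorem one_mem_leftMultiplicativeDomain {R A : Type*} [CommSemiring R] [Semiring A]
    [Algebra R A] {μ : A →ₗ[R] R} (h : μ 1 = 1) : 1 ∈ leftMultiplicativeDomain μ := fun a => by
  simp [h]

section States

variable {A : Type*} [Ring A] [StarRing A] [Algebra ℂ A]

structure IsState (μ : A →ₗ[ℂ] ℂ) : Prop where
  map_star_mul_self_nonneg : ∀ a, 0 ≤ μ (star a * a)
  map_one : μ 1 = 1

structure IsPureState (μ : A →ₗ[ℂ] ℂ) : Prop extends IsState μ where
  eq_of_eq_convexComb : ∀ μ₁ μ₂ : A →ₗ[ℂ] ℂ, IsState μ₁ → IsState μ₂ → ∀ t : ℝ, 0 < t → t < 1 →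
    μ = (t : ℂ) • μ₁ + ((1 - t : ℝ) : ℂ) • μ₂ → μ₁ = μ ∧ μ₂ = μ

variable {μ : A →ₗ[ℂ] ℂ}

theorem IsState.map_algebraMap (hμ : IsState μ) (r : ℝ) : μ (algebraMap ℝ A r) = r := by
  simp [Algebra.algebraMap_eq_smul_one, hμ.map_one]

variable [PartialOrder A] [StarOrderedRing A]

theorem IsState.map_nonneg (hμ : IsState μ) {x : A} (hx : 0 ≤ x) : 0 ≤ μ x :=
  map_nonneg_of_map_star_mul_self_nonneg hμ.map_star_mul_self_nonneg hx

theorem IsState.smul_comp_mulLeft (hμ : IsState μ) {c : A} (hc : c ∈ Set.center A)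
    (hc₀ : 0 ≤ c) {s : ℝ} (hs : 0 < s) (hcs : μ c = s) :
    IsState ((s : ℂ)⁻¹ • (μ ∘ₗ LinearMap.mulLeft ℂ c)) where
  map_star_mul_self_nonneg b := by
    have hconj : c * (star b * b) = star b * c * b := by
      rw [← mul_assoc, (hc.comm (star b)).eq]
    have hs_inv : (0 : ℂ) ≤ (s : ℂ)⁻¹ := by
      rw [← Complex.ofReal_inv]; exact_mod_cast inv_nonneg.mpr hs.le
    simpa [hconj] using mul_nonneg hs_inv (hμ.map_nonneg (star_left_conjugate_nonneg hc₀ b))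
  map_one := by
    have : (s : ℂ) ≠ 0 := by exact_mod_cast hs.ne'
    simp [hcs, this]

theorem IsPureState.mem_leftMultiplicativeDomain_of_nonneg_of_le_one (hμ : IsPureState μ)
    {w : A} (hw : w ∈ Set.center A) (hw₀ : 0 ≤ w) (hw₁ : w ≤ 1) {t : ℝ} (hwt : μ w = t)
    (ht₀ : 0 < t) (ht₁ : t < 1) : w ∈ leftMultiplicativeDomain μ := by
  have hμ₁ := hμ.smul_comp_mulLeft hw hw₀ ht₀ hwt
  have hμ₂ := hμ.smul_comp_mulLeft ((Subring.center A).sub_mem (Set.one_mem_center) hw)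
    (sub_nonneg.mpr hw₁) (sub_pos.mpr ht₁) (by simp [hwt, hμ.map_one])
  have ht : (t : ℂ) ≠ 0 := by exact_mod_cast ht₀.ne'
  have ht' : ((1 - t : ℝ) : ℂ) ≠ 0 := by exact_mod_cast (sub_pos.mpr ht₁).ne'
  have hsplit : μ = (t : ℂ) • ((t : ℂ)⁻¹ • (μ ∘ₗ LinearMap.mulLeft ℂ w)) +
      ((1 - t : ℝ) : ℂ) • (((1 - t : ℝ) : ℂ)⁻¹ • (μ ∘ₗ LinearMap.mulLeft ℂ (1 - w))) := by
    ext b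
    simp only [LinearMap.add_apply, LinearMap.smul_apply, LinearMap.comp_apply,
      LinearMap.mulLeft_apply, smul_eq_mul, mul_inv_cancel_left₀ ht, mul_inv_cancel_left₀ ht',
      sub_mul, one_mul, map_sub]
    ring
  intro a
  have := LinearMap.congr_fun (hμ.eq_of_eq_convexComb _ _ hμ₁ hμ₂ t ht₀ ht₁ hsplit).1 a
  simp only [LinearMap.smul_apply, LinearMap.comp_apply, LinearMap.mulLeft_apply,
    smul_eq_mul] at this
  rw [hwt, ← this, mul_inv_cancel_left₀ ht]

end States

section CStarAlgebra

variable {A : Type*} [CStarAlgebra A] [PartialOrder A] [StarOrderedRing A] {μ : A →ₗ[ℂ] ℂ}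

theorem IsState.exists_eq_ofReal_abs_le_norm (hμ : IsState μ) {x : A} (hx : IsSelfAdjoint x) :
    ∃ ξ : ℝ, μ x = ξ ∧ |ξ| ≤ ‖x‖ := by
  have h₁ := hμ.map_nonneg (neg_le_iff_add_nonneg.mp hx.neg_algebraMap_norm_le_self)
  have h₂ := hμ.map_nonneg (sub_nonneg.mpr hx.le_algebraMap_norm_self)
  rw [map_add, hμ.map_algebraMap, Complex.nonneg_iff] at h₁
  rw [map_sub, hμ.map_algebraMap, Complex.nonneg_iff] at h₂
  simp only [Complex.add_re, Complex.add_im, Complex.sub_re, Complex.sub_im, Complex.ofReal_re,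
    Complex.ofReal_im] at h₁ h₂
  exact ⟨(μ x).re, Complex.ext rfl (by rw [Complex.ofReal_im]; linarith),
    abs_le.mpr ⟨by linarith, by linarith⟩⟩

theorem IsPureState.mem_leftMultiplicativeDomain_of_isSelfAdjoint (hμ : IsPureState μ) {x : A}
    (hx : x ∈ Set.center A) (hsa : IsSelfAdjoint x) : x ∈ leftMultiplicativeDomain μ := by
  obtain ⟨ξ, hξ, hξx⟩ := hμ.exists_eq_ofReal_abs_le_norm hsa
  set r := ‖x‖ + 1
  have hr : 0 < r := by positivity
  -- Rescale `x` affinely to `0 ≤ w ≤ 1`; the margin `1` in `r` keeps `μ w` away from `0` and `1`.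
  set y : A := x + algebraMap ℝ A r
  set w : A := (2 * r)⁻¹ • y
  have hw : w ∈ Set.center A := Set.smul_mem_center _
    ((Subalgebra.center ℝ A).add_mem hx ((Subalgebra.center ℝ A).algebraMap_mem r))
  have hw₀ : 0 ≤ w := by
    have : w = (2 * r)⁻¹ • ((x + algebraMap ℝ A ‖x‖) + 1) := by simp [w, y, r, add_assoc]
    rw [this]
    exact smul_nonneg (by positivity)
      (add_nonneg (neg_le_iff_add_nonneg.mp hsa.neg_algebraMap_norm_le_self) zero_le_one)
  have hw₁ : w ≤ 1 := by
    have : 1 - w = (2 * r)⁻¹ • ((algebraMap ℝ A ‖x‖ - x) + 1) := by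
      simp only [w, y, r, Algebra.algebraMap_eq_smul_one]
      match_scalars <;> field_simp; norm_num
    rw [← sub_nonneg, this]
    exact smul_nonneg (by positivity)
      (add_nonneg (sub_nonneg.mpr hsa.le_algebraMap_norm_self) zero_le_one)
  have hwt : μ w = ((ξ + r) / (2 * r) : ℝ) := by
    simp only [w, y, LinearMap.map_smul_of_tower, map_add, hξ, hμ.map_algebraMap,
      Complex.real_smul]
    push_cast
    ring
  have hmem := hμ.mem_leftMultiplicativeDomain_of_nonneg_of_le_one hw hw₀ hw₁ hwt
    (div_pos (by linarith [abs_le.mp hξx]) (by positivity))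
    ((div_lt_one (by positivity)).mpr (by linarith [abs_le.mp hξx]))
  have hxw : x = (2 * r) • w - algebraMap ℝ A r := by
    rw [smul_inv_smul₀ (by positivity), add_sub_cancel_right]
  rw [hxw, Algebra.algebraMap_eq_smul_one]
  exact sub_mem (Submodule.smul_of_tower_mem _ _ hmem)
    (Submodule.smul_of_tower_mem _ _ (one_mem_leftMultiplicativeDomain hμ.map_one))

theorem IsPureState.mem_leftMultiplicativeDomain_of_mem_center (hμ : IsPureState μ) {z : A}
    (hz : z ∈ Set.center A) : z ∈ leftMultiplicativeDomain μ := by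
  have hstar := Set.star_mem_center hz
  have hre : (realPart z : A) ∈ Set.center A := by
    rw [realPart_apply_coe]
    exact Set.smul_mem_center _ (Set.add_mem_center hz hstar)
  have him : (imaginaryPart z : A) ∈ Set.center A := by
    rw [imaginaryPart_apply_coe]
    exact Set.smul_mem_center _ (Set.smul_mem_center _ ((Subring.center A).sub_mem hz hstar))
  rw [← realPart_add_I_smul_imaginaryPart z]
  exact add_mem (hμ.mem_leftMultiplicativeDomain_of_isSelfAdjoint hre (realPart z).2)
    (Submodule.smul_mem _ _ (hμ.mem_leftMultiplicativeDomain_of_isSelfAdjoint him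
      (imaginaryPart z).2))

end CStarAlgebra

/-- For a pure state μ on a unital C*-algebra A and a central C*-subalgebra
Z containing the unit, μ(z a) = μ(z) μ(a) for all z ∈ Z, a ∈ A; in particular μ|_Z is
multiplicative. -/
theorem pure_state_multiplicative_on_central_subalgebra
    {A : Type*} [CStarAlgebra A]
    (Z : StarSubalgebra ℂ A) (hZcentral : (Z : Set A) ⊆ Set.center A)
    (μ : A →ₗ[ℂ] ℂ)
    (hpos : ∀ a : A, 0 ≤ μ (star a * a))
    (hone : μ 1 = 1)
    (hpure : ∀ (μ₁ μ₂ : A →ₗ[ℂ] ℂ),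
      (∀ a : A, 0 ≤ μ₁ (star a * a)) → μ₁ 1 = 1 →
      (∀ a : A, 0 ≤ μ₂ (star a * a)) → μ₂ 1 = 1 →
      ∀ t : ℝ, 0 < t → t < 1 →
        μ = (t : ℂ) • μ₁ + ((1 - t : ℝ) : ℂ) • μ₂ → μ₁ = μ ∧ μ₂ = μ)
    (z : A) (hz : z ∈ Z) (a : A) :
    μ (z * a) = μ z * μ a := by
  -- A C⋆-algebra carries no global order instance; the spectral order is the one with
  -- `0 ≤ a ↔ a = b⋆ b`.
  let _ := CStarAlgebra.spectralOrder A
  have := CStarAlgebra.spectralOrderedRing A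
  have hμ : IsPureState μ :=
    ⟨⟨hpos, hone⟩, fun μ₁ μ₂ h₁ h₂ => hpure μ₁ μ₂ h₁.1 h₁.2 h₂.1 h₂.2⟩
  exact hμ.mem_leftMultiplicativeDomain_of_mem_center (hZcentral hz) a
end

section
/- Let G be a group acting on a topological space M by homeomorphisms β_g, let G₀ ⊆ G be a finite subset, and let V ⊆ M be a nonempty open set. Then there exists a nonempty open set Δ ⊆ V such that for each g ∈ G₀, either β_g restricted to Δ is the identity on Δ, or β_g(Δ) ∩ Δ = ∅. -/
open Set

section

variable {M : Type*}

def IsFixedOrDisjoint (f : M → M) (s : Set M) : Prop :=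
  EqOn f id s ∨ Disjoint (f '' s) s

theorem IsFixedOrDisjoint.mono {f : M → M} {s t : Set M} (h : IsFixedOrDisjoint f s)
    (hts : t ⊆ s) : IsFixedOrDisjoint f t :=
  h.imp (fun hfix => hfix.mono hts) fun hdisj => hdisj.mono (image_mono hts) hts

variable [TopologicalSpace M] [T2Space M]

/-- If `f` moves some `m ∈ U`, separate `f m` and `m` by disjoint open sets `A ∋ f m`, `B ∋ m`;
then `W = U ∩ B ∩ f⁻¹ A` contains `m` and `f '' W ⊆ A` misses `W ⊆ B`. -/
theorem exists_isOpen_subset_isFixedOrDisjoint {f : M → M} (hf : Continuous f) {U : Set M}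
    (hU : IsOpen U) (hUne : U.Nonempty) :
    ∃ W ⊆ U, IsOpen W ∧ W.Nonempty ∧ IsFixedOrDisjoint f W := by
  by_cases hfix : EqOn f id U
  · exact ⟨U, Subset.rfl, hU, hUne, Or.inl hfix⟩
  obtain ⟨m, hmU, hm⟩ : ∃ m ∈ U, f m ≠ m := by simpa [EqOn] using hfix
  obtain ⟨A, B, hA, hB, hfmA, hmB, hAB⟩ := t2_separation hm
  refine ⟨U ∩ B ∩ f ⁻¹' A, fun x hx => hx.1.1, (hU.inter hB).inter (hA.preimage hf),
    ⟨m, ⟨hmU, hmB⟩, hfmA⟩, Or.inr ?_⟩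
  refine hAB.mono ?_ fun x hx => hx.1.2
  rintro _ ⟨x, hx, rfl⟩
  exact hx.2

theorem exists_isOpen_subset_forall_isFixedOrDisjoint {ι : Type*} {f : ι → M → M}
    (hf : ∀ i, Continuous (f i)) (s : Finset ι) {U : Set M} (hU : IsOpen U)
    (hUne : U.Nonempty) :
    ∃ W ⊆ U, IsOpen W ∧ W.Nonempty ∧ ∀ i ∈ s, IsFixedOrDisjoint (f i) W := by
  classical
  induction s using Finset.induction_on with
  | empty => exact ⟨U, Subset.rfl, hU, hUne, by simp⟩
  | insert i s _ ih =>
    obtain ⟨Δ, hΔU, hΔ, hΔne, hΔs⟩ := ih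
    obtain ⟨W, hWΔ, hW, hWne, hWi⟩ := exists_isOpen_subset_isFixedOrDisjoint (hf i) hΔ hΔne
    refine ⟨W, hWΔ.trans hΔU, hW, hWne, (Finset.forall_mem_insert _ _ _).mpr ⟨hWi, ?_⟩⟩
    exact fun j hj => (hΔs j hj).mono hWΔ

end

/-- For a group acting by homeomorphisms on a (Hausdorff) topological space,
any finite G₀ ⊆ G and nonempty open V contain a nonempty open Δ ⊆ V on which each
g ∈ G₀ either acts as the identity or moves Δ completely off itself. -/
theorem exists_open_subset_fixed_or_disjoint
    {M : Type*} [TopologicalSpace M] [T2Space M]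
    {G : Type*} (β : G → M ≃ₜ M)
    (G₀ : Finset G) (V : Set M) (hV : IsOpen V) (hVne : V.Nonempty) :
    ∃ Δ : Set M, IsOpen Δ ∧ Δ.Nonempty ∧ Δ ⊆ V ∧
      ∀ g ∈ G₀, (∀ m ∈ Δ, β g m = m) ∨ ((β g) '' Δ ∩ Δ = ∅) := by
  obtain ⟨Δ, hΔV, hΔ, hΔne, hΔG₀⟩ :=
    exists_isOpen_subset_forall_isFixedOrDisjoint (fun g => (β g).continuous) G₀ hV hVne
  refine ⟨Δ, hΔ, hΔne, hΔV, fun g hg => ?_⟩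
  exact (hΔG₀ g hg).imp (fun hfix m hm => hfix hm) disjoint_iff_inter_eq_empty.mp
end

section
/- Let X, Y be compact Hausdorff spaces, Z a compact Hausdorff space with continuous surjections π_X : Z → X and π_Y : Z → Y. Suppose that for all nonzero f ∈ C(X) and nonzero g ∈ C(Y) the product (f∘π_X)(g∘π_Y) is not identically zero on Z. Then for every nonempty open set V ⊆ X, π_Y(π_X⁻¹(V)) = Y. -/
/-!
Both spaces are completely regular, so every nonempty open set contains the support of a nonzero
continuous function; the hypothesis therefore says that `πX⁻¹' U` meets `πY⁻¹' W` for all nonempty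
open `U ⊆ X`, `W ⊆ Y`. If `y ∉ πY '' (πX⁻¹' V)`, pick a closed neighbourhood `C ⊆ V` of a point
of `V`: the compact set `πY '' (πX⁻¹' C)` misses `y`, so its complement `W` is an open
neighbourhood of `y` whose preimage misses `πX⁻¹' (interior C)`.
-/

open Set

theorem CompletelyRegularSpace.exists_ne_zero_support_subset {X : Type*} [TopologicalSpace X]
    [CompletelyRegularSpace X] {V : Set X} (hV : IsOpen V) (hVne : V.Nonempty) :
    ∃ f : C(X, ℂ), f ≠ 0 ∧ Function.support f ⊆ V := by
  obtain ⟨x, hx⟩ := hVne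
  obtain ⟨f, hf, hfx, hfV⟩ :=
    CompletelyRegularSpace.completely_regular x Vᶜ hV.isClosed_compl (not_not.mpr hx)
  refine ⟨⟨fun x ↦ ((1 - f x : ℝ) : ℂ), by fun_prop⟩, fun h ↦ ?_, fun x' hx' ↦ ?_⟩
  · simpa [hfx] using DFunLike.congr_fun h x
  · by_contra hx'V
    simp [hfV hx'V] at hx'

theorem preimage_inter_preimage_nonempty_of_forall_mul_ne_zero {X Y Z : Type*}
    [TopologicalSpace X] [TopologicalSpace Y] [CompletelyRegularSpace X] [CompletelyRegularSpace Y]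
    (πX : Z → X) (πY : Z → Y)
    (hprod : ∀ f : C(X, ℂ), f ≠ 0 → ∀ g : C(Y, ℂ), g ≠ 0 → ∃ z : Z, f (πX z) * g (πY z) ≠ 0)
    {U : Set X} {W : Set Y} (hU : IsOpen U) (hUne : U.Nonempty) (hW : IsOpen W)
    (hWne : W.Nonempty) :
    (πX ⁻¹' U ∩ πY ⁻¹' W).Nonempty := by
  obtain ⟨f, hf, hfU⟩ := CompletelyRegularSpace.exists_ne_zero_support_subset hU hUne
  obtain ⟨g, hg, hgW⟩ := CompletelyRegularSpace.exists_ne_zero_support_subset hW hWne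
  obtain ⟨z, hz⟩ := hprod f hf g hg
  exact ⟨z, hfU (left_ne_zero_of_mul hz), hgW (right_ne_zero_of_mul hz)⟩

theorem image_preimage_eq_univ_of_forall_preimage_inter_nonempty {X Y Z : Type*}
    [TopologicalSpace X] [TopologicalSpace Y] [TopologicalSpace Z] [RegularSpace X] [T2Space Y]
    [CompactSpace Z] (πX : C(Z, X)) (πY : C(Z, Y))
    (hmeet : ∀ (U : Set X) (W : Set Y), IsOpen U → U.Nonempty → IsOpen W → W.Nonempty →
      (πX ⁻¹' U ∩ πY ⁻¹' W).Nonempty)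
    {V : Set X} (hV : IsOpen V) (hVne : V.Nonempty) :
    πY '' (πX ⁻¹' V) = univ := by
  refine eq_univ_of_forall fun y ↦ ?_
  obtain ⟨x, hx⟩ := hVne
  obtain ⟨C, hCx, hC, hCV⟩ := exists_mem_nhds_isClosed_subset (hV.mem_nhds hx)
  have hK : IsCompact (πY '' (πX ⁻¹' C)) :=
    (hC.preimage πX.continuous).isCompact.image πY.continuous
  by_contra hy
  have hyK : y ∉ πY '' (πX ⁻¹' C) := fun hyK ↦ hy (image_mono (preimage_mono hCV) hyK)
  obtain ⟨z, hzC, hzK⟩ := hmeet (interior C) (πY '' (πX ⁻¹' C))ᶜ isOpen_interior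
    ⟨x, mem_interior_iff_mem_nhds.mpr hCx⟩ hK.isClosed.isOpen_compl ⟨y, hyK⟩
  exact hzK (mem_image_of_mem πY (interior_subset (s := C) hzC))

theorem image_preimage_eq_univ_of_nonzero_products_general
    {X Y Z : Type*} [TopologicalSpace X] [TopologicalSpace Y] [TopologicalSpace Z]
    [CompactSpace X] [T2Space X] [CompactSpace Y] [T2Space Y]
    [CompactSpace Z]
    (πX : C(Z, X)) (πY : C(Z, Y))
    (hprod : ∀ f : C(X, ℂ), f ≠ 0 → ∀ g : C(Y, ℂ), g ≠ 0 →
      ∃ z : Z, f (πX z) * g (πY z) ≠ 0)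
    (V : Set X) (hV : IsOpen V) (hVne : V.Nonempty) :
    πY '' (πX ⁻¹' V) = Set.univ :=
  image_preimage_eq_univ_of_forall_preimage_inter_nonempty πX πY
    (fun _ _ hU hUne hW hWne ↦
      preimage_inter_preimage_nonempty_of_forall_mul_ne_zero πX πY hprod hU hUne hW hWne)
    hV hVne

/-- For compact Hausdorff spaces X, Y, Z with continuous surjections
π_X : Z → X, π_Y : Z → Y, if nonzero f ∈ C(X), g ∈ C(Y) always have
(f∘π_X)(g∘π_Y) ≢ 0, then π_Y(π_X⁻¹(V)) = Y for every nonempty open V ⊆ X. -/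
theorem image_preimage_eq_univ_of_nonzero_products
    {X Y Z : Type*} [TopologicalSpace X] [TopologicalSpace Y] [TopologicalSpace Z]
    [CompactSpace X] [T2Space X] [CompactSpace Y] [T2Space Y]
    [CompactSpace Z] [T2Space Z]
    (πX : C(Z, X)) (πY : C(Z, Y))
    (hπX : Function.Surjective πX) (hπY : Function.Surjective πY)
    (hprod : ∀ f : C(X, ℂ), f ≠ 0 → ∀ g : C(Y, ℂ), g ≠ 0 →
      ∃ z : Z, f (πX z) * g (πY z) ≠ 0)
    (V : Set X) (hV : IsOpen V) (hVne : V.Nonempty) :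
    πY '' (πX ⁻¹' V) = Set.univ :=
  image_preimage_eq_univ_of_nonzero_products_general πX πY hprod V hV hVne
end
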